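/- arXiv:1410.0386 — 3 statements merged into one kernel-verified Lean document; each statement's English description precedes it below -/
import Mathlib

section
/- Let m ≥ 1, t₀ < T, let r : ℝ^m → ℝ^m and q : ℝ^m → (symmetric positive definite m×m matrices) be continuous, let h : ℝ^m → ℝ be continuous, and let Ū : [t₀,T] × ℝ^m → ℝ be continuously differentiable with ∂_s Ū(s,x) + ⟨r(x), ∇_x Ū(s,x)⟩ − (1/2)⟨∇_x Ū(s,x), q(x)·∇_x Ū(s,x)⟩ ≥ 0 on (t₀,T) × ℝ^m and Ū(T,x) ≤ h(x) for all x. Then for every continuously differentiable path φ : [t₀,T] → ℝ^m with φ(t₀) = x₀, Ū(t₀,x₀) ≤ ∫_{t₀}^T (1/2)⟨φ'(s) − r(φ(s)), q(φ(s))⁻¹(φ'(s) − r(φ(s)))⟩ ds + h(φ(T)). Consequently Ū(t₀,x₀) ≤ G(t₀,x₀), where G(t₀,x₀) is the infimum of the right-hand side over all such paths φ. -/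
/-!
Along a `C¹` path `φ`, the chain rule and the subsolution inequality give
`d/ds Ū(s, φ s) = ∂ₛŪ + ⟨∇ₓŪ, φ'⟩ ≥ ∂ₛŪ + H(φ, ∇ₓŪ) - L(φ, φ') ≥ -L(φ, φ')`,
because `H(x, ·)` is the concave conjugate of `L(x, ·)`. Integrating over `[t₀, T]` and using
`Ū(T, ·) ≤ h` bounds `Ū(t₀, x₀)` by the cost of `φ`; the constant path makes the set of costs
nonempty, so the bound passes to its infimum.
-/

open Matrix Set

/-- The continuous linear map `w ↦ v ⬝ᵥ w` on `ℝ^m`, used to express the spatial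
gradient of a function as a Fréchet derivative. -/
noncomputable def dotCLM {m : ℕ} (v : Fin m → ℝ) : (Fin m → ℝ) →L[ℝ] ℝ :=
  LinearMap.toContinuousLinearMap
    { toFun := fun w => v ⬝ᵥ w
      map_add' := fun w₁ w₂ => by simp [dotProduct_add]
      map_smul' := fun c w => by simp [dotProduct_smul] }

theorem Continuous.matrix_inv_of_det_ne_zero {X n R : Type*} [TopologicalSpace X] [Fintype n]
    [DecidableEq n] [Field R] [TopologicalSpace R] [IsTopologicalDivisionRing R]
    {A : X → Matrix n n R} (hA : Continuous A) (hdet : ∀ x, (A x).det ≠ 0) :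
    Continuous fun x => (A x)⁻¹ :=
  continuous_iff_continuousAt.2 fun x =>
    (continuousAt_matrix_inv _
      (by simpa [Ring.inverse_eq_inv'] using continuousAt_inv₀ (hdet x))).comp hA.continuousAt

theorem Matrix.PosDef.two_mul_dotProduct_le {n : Type*} [Fintype n] [DecidableEq n]
    {Q : Matrix n n ℝ} (hQ : Q.PosDef) (p b : n → ℝ) :
    2 * (p ⬝ᵥ b) ≤ p ⬝ᵥ Q *ᵥ p + b ⬝ᵥ Q⁻¹ *ᵥ b := by
  have hQQinv : Q * Q⁻¹ = 1 := Q.mul_nonsing_inv (isUnit_iff_ne_zero.2 hQ.det_pos.ne')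
  have hsymm : Qᵀ = Q := by simpa using hQ.isHermitian.eq
  have hcross : Q⁻¹ *ᵥ b ⬝ᵥ Q *ᵥ p = p ⬝ᵥ b := by
    rw [dotProduct_mulVec, ← mulVec_transpose, hsymm, mulVec_mulVec, hQQinv, one_mulVec,
      dotProduct_comm]
  have hQc : Q *ᵥ (p - Q⁻¹ *ᵥ b) = Q *ᵥ p - b := by
    rw [mulVec_sub, mulVec_mulVec, hQQinv, one_mulVec]
  have hnonneg := hQ.posSemidef.dotProduct_mulVec_nonneg (p - Q⁻¹ *ᵥ b)
  rw [star_trivial, hQc, sub_dotProduct, dotProduct_sub, dotProduct_sub, hcross,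
    dotProduct_comm (Q⁻¹ *ᵥ b) b] at hnonneg
  linarith

section ChainRule

variable {E F : Type*} [NormedAddCommGroup E] [NormedSpace ℝ E]
  [NormedAddCommGroup F] [NormedSpace ℝ F] {U : ℝ → E → F} {s : ℝ} {x : E}

theorem hasFDerivAt_uncurry_of_partials {ut : F} {ux : E →L[ℝ] F}
    (hU : DifferentiableAt ℝ (Function.uncurry U) (s, x))
    (hUt : HasDerivAt (fun t => U t x) ut s) (hUx : HasFDerivAt (U s) ux x) :
    HasFDerivAt (Function.uncurry U)
      ((ContinuousLinearMap.fst ℝ ℝ E).smulRight ut + ux.comp (ContinuousLinearMap.snd ℝ ℝ E))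
      (s, x) := by
  set D := fderiv ℝ (Function.uncurry U) (s, x)
  have hD : HasFDerivAt (Function.uncurry U) D (s, x) := hU.hasFDerivAt
  have htime : D (1, 0) = ut := by
    have hD' := hD.comp_hasDerivAt s ((hasDerivAt_id' s).prodMk (hasDerivAt_const s x))
    exact hD'.unique hUt
  have hspace : D.comp (ContinuousLinearMap.inr ℝ ℝ E) = ux :=
    (hD.comp x ((hasFDerivAt_const s x).prodMk (hasFDerivAt_id x))).unique hUx
  convert hD using 1
  refine ContinuousLinearMap.ext fun ⟨a, v⟩ => ?_
  have hsplit : ((a, v) : ℝ × E) = a • ((1 : ℝ), (0 : E)) + ((0 : ℝ), v) := by simp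
  rw [hsplit, map_add, map_add, map_smul, map_smul, htime, ← hspace]
  simp [Prod.mk_zero_zero]

theorem hasDerivAt_uncurry_comp_of_partials {φ : ℝ → E} {φ' : E} {ut : F} {ux : E →L[ℝ] F}
    (hU : DifferentiableAt ℝ (Function.uncurry U) (s, φ s))
    (hUt : HasDerivAt (fun t => U t (φ s)) ut s) (hUx : HasFDerivAt (U s) ux (φ s))
    (hφ : HasDerivAt φ φ' s) :
    HasDerivAt (fun t => U t (φ t)) (ut + ux φ') s := by
  have hcomp := (hasFDerivAt_uncurry_of_partials hU hUt hUx).comp_hasDerivAt s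
    ((hasDerivAt_id' s).prodMk hφ)
  simp only [_root_.add_apply, ContinuousLinearMap.smulRight_apply, ContinuousLinearMap.coe_fst',
    one_smul, ContinuousLinearMap.comp_apply, ContinuousLinearMap.coe_snd'] at hcomp
  exact hcomp

end ChainRule

section Hamiltonian

variable {n : Type*} [Fintype n] [DecidableEq n]
  (r : (n → ℝ) → n → ℝ) (q : (n → ℝ) → Matrix n n ℝ)

noncomputable def hamiltonian (x p : n → ℝ) : ℝ :=
  r x ⬝ᵥ p - (1 / 2) * (p ⬝ᵥ q x *ᵥ p)

noncomputable def lagrangian (x β : n → ℝ) : ℝ :=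
  (1 / 2) * ((β - r x) ⬝ᵥ (q x)⁻¹ *ᵥ (β - r x))

/-- Fenchel–Young; equality holds at `β = r x - q x *ᵥ p`. -/
theorem hamiltonian_le_dotProduct_add_lagrangian {x : n → ℝ} (hq : (q x).PosDef)
    (p β : n → ℝ) : hamiltonian r q x p ≤ p ⬝ᵥ β + lagrangian r q x β := by
  have := hq.two_mul_dotProduct_le p (-(β - r x))
  simp only [dotProduct_neg, neg_dotProduct, mulVec_neg, neg_neg, dotProduct_sub] at this
  unfold hamiltonian lagrangian
  rw [dotProduct_comm (r x)]
  linarith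

variable {r q}

theorem Continuous.lagrangian {X : Type*} [TopologicalSpace X] (hr : Continuous r)
    (hq : Continuous q) (hqdet : ∀ x, (q x).det ≠ 0) {x β : X → n → ℝ}
    (hx : Continuous x) (hβ : Continuous β) :
    Continuous fun a => lagrangian r q (x a) (β a) := by
  have hdiff : Continuous fun a => β a - r (x a) := hβ.sub (hr.comp hx)
  exact continuous_const.mul (hdiff.dotProduct
    (((hq.matrix_inv_of_det_ne_zero hqdet).comp hx).matrix_mulVec hdiff))

end Hamiltonian

theorem le_integral_lagrangian_add_of_subsolution {m : ℕ} {t₀ T : ℝ} (ht : t₀ ≤ T)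
    {r : (Fin m → ℝ) → (Fin m → ℝ)} {q : (Fin m → ℝ) → Matrix (Fin m) (Fin m) ℝ}
    (hr : Continuous r) (hqc : Continuous q) (hqpd : ∀ x, (q x).PosDef)
    {h : (Fin m → ℝ) → ℝ} {U Ut : ℝ → (Fin m → ℝ) → ℝ} {Ux : ℝ → (Fin m → ℝ) → (Fin m → ℝ)}
    (hU : Differentiable ℝ (Function.uncurry U))
    (hUt : ∀ s x, HasDerivAt (fun t => U t x) (Ut s x) s)
    (hUx : ∀ s x, HasFDerivAt (U s) (dotCLM (Ux s x)) x)
    (hsub : ∀ s ∈ Ioo t₀ T, ∀ x, 0 ≤ Ut s x + hamiltonian r q x (Ux s x))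
    (hterm : ∀ x, U T x ≤ h x)
    {φ φ' : ℝ → Fin m → ℝ} (hφ : ∀ s, HasDerivAt φ (φ' s) s) (hφ' : Continuous φ') :
    U t₀ (φ t₀) ≤ (∫ s in t₀..T, lagrangian r q (φ s) (φ' s)) + h (φ T) := by
  have hderiv : ∀ s, HasDerivAt (fun t => U t (φ t)) (Ut s (φ s) + Ux s (φ s) ⬝ᵥ φ' s) s :=
    fun s => hasDerivAt_uncurry_comp_of_partials (hU _) (hUt s (φ s)) (hUx s (φ s)) (hφ s)
  have hcont : Continuous fun t => U t (φ t) :=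
    continuous_iff_continuousAt.2 fun s => (hderiv s).continuousAt
  have hLc : Continuous fun s => lagrangian r q (φ s) (φ' s) :=
    hr.lagrangian hqc (fun x => (hqpd x).det_pos.ne')
      (continuous_iff_continuousAt.2 fun s => (hφ s).continuousAt) hφ'
  have hbound : ∀ s ∈ Ioo t₀ T,
      -lagrangian r q (φ s) (φ' s) ≤ Ut s (φ s) + Ux s (φ s) ⬝ᵥ φ' s := fun s hs => by
    linarith [hsub s hs (φ s),
      hamiltonian_le_dotProduct_add_lagrangian r q (hqpd (φ s)) (Ux s (φ s)) (φ' s)]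
  have hint := intervalIntegral.integral_le_sub_of_hasDeriv_right_of_le ht hcont.continuousOn
    (fun s _ => (hderiv s).hasDerivWithinAt) hLc.fun_neg.integrableOn_Icc hbound
  rw [intervalIntegral.integral_neg] at hint
  linarith [hterm (φ T)]

theorem subsolution_le_value_function_general {m : ℕ} (t₀ T : ℝ) (ht : t₀ < T)
    (r : (Fin m → ℝ) → (Fin m → ℝ)) (q : (Fin m → ℝ) → Matrix (Fin m) (Fin m) ℝ)
    (hr : Continuous r) (hqc : Continuous q) (hqpd : ∀ x, (q x).PosDef)
    (h : (Fin m → ℝ) → ℝ)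
    (U Ut : ℝ → (Fin m → ℝ) → ℝ) (Ux : ℝ → (Fin m → ℝ) → (Fin m → ℝ))
    (hU : ContDiff ℝ 1 (Function.uncurry U))
    (hUt : ∀ s x, HasDerivAt (fun t => U t x) (Ut s x) s)
    (hUx : ∀ s x, HasFDerivAt (fun y => U s y) (dotCLM (Ux s x)) x)
    (hsub : ∀ s ∈ Set.Ioo t₀ T, ∀ x,
      0 ≤ Ut s x + r x ⬝ᵥ Ux s x - (1 / 2) * (Ux s x ⬝ᵥ (q x).mulVec (Ux s x)))
    (hterm : ∀ x, U T x ≤ h x)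
    (x₀ : Fin m → ℝ) :
    (∀ φ φ' : ℝ → Fin m → ℝ, ContDiff ℝ 1 φ → (∀ s, HasDerivAt φ (φ' s) s) →
      φ t₀ = x₀ →
      U t₀ x₀ ≤
        (∫ s in t₀..T,
          (1 / 2) * ((φ' s - r (φ s)) ⬝ᵥ (q (φ s))⁻¹.mulVec (φ' s - r (φ s))))
          + h (φ T))
    ∧ U t₀ x₀ ≤
        sInf { y : ℝ | ∃ φ φ' : ℝ → Fin m → ℝ, ContDiff ℝ 1 φ ∧
          (∀ s, HasDerivAt φ (φ' s) s) ∧ φ t₀ = x₀ ∧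
          y = (∫ s in t₀..T,
                (1 / 2) * ((φ' s - r (φ s)) ⬝ᵥ (q (φ s))⁻¹.mulVec (φ' s - r (φ s))))
                + h (φ T) } := by
  have hpath : ∀ φ φ' : ℝ → Fin m → ℝ, ContDiff ℝ 1 φ → (∀ s, HasDerivAt φ (φ' s) s) →
      φ t₀ = x₀ → U t₀ x₀ ≤ (∫ s in t₀..T, lagrangian r q (φ s) (φ' s)) + h (φ T) := by
    rintro φ φ' hφ hφ' rfl
    have hφ'c : Continuous φ' := by
      simpa [funext fun s => (hφ' s).deriv] using hφ.continuous_deriv le_rfl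
    exact le_integral_lagrangian_add_of_subsolution ht.le hr hqc hqpd
      (hU.differentiable one_ne_zero) hUt hUx
      (fun s hs x => by unfold hamiltonian; linarith [hsub s hs x]) hterm hφ' hφ'c
  refine ⟨hpath, le_csInf ⟨_, fun _ => x₀, fun _ => 0, contDiff_const,
    fun s => hasDerivAt_const s x₀, rfl, rfl⟩ ?_⟩
  rintro y ⟨φ, φ', hφ, hφ', hφ₀, rfl⟩
  exact hpath φ φ' hφ hφ' hφ₀

/-- Any classical `C¹` subsolution `Ū` of the homogenized HJB equation with terminal
condition `Ū(T,·) ≤ h` is bounded above along every `C¹` path by the running cost plus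
terminal cost, and hence is bounded above by the value function
`G(t₀,x₀) = inf_φ { ∫_{t₀}^T (1/2)⟨φ'−r(φ), q(φ)⁻¹(φ'−r(φ))⟩ ds + h(φ(T)) }`. -/
theorem subsolution_le_value_function {m : ℕ} (hm : 1 ≤ m) (t₀ T : ℝ) (ht : t₀ < T)
    (r : (Fin m → ℝ) → (Fin m → ℝ)) (q : (Fin m → ℝ) → Matrix (Fin m) (Fin m) ℝ)
    (hr : Continuous r) (hqc : Continuous q) (hqpd : ∀ x, (q x).PosDef)
    (h : (Fin m → ℝ) → ℝ) (hh : Continuous h)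
    (U Ut : ℝ → (Fin m → ℝ) → ℝ) (Ux : ℝ → (Fin m → ℝ) → (Fin m → ℝ))
    (hU : ContDiff ℝ 1 (Function.uncurry U))
    (hUt : ∀ s x, HasDerivAt (fun t => U t x) (Ut s x) s)
    (hUx : ∀ s x, HasFDerivAt (fun y => U s y) (dotCLM (Ux s x)) x)
    (hsub : ∀ s ∈ Set.Ioo t₀ T, ∀ x,
      0 ≤ Ut s x + r x ⬝ᵥ Ux s x - (1 / 2) * (Ux s x ⬝ᵥ (q x).mulVec (Ux s x)))
    (hterm : ∀ x, U T x ≤ h x)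
    (x₀ : Fin m → ℝ) :
    (∀ φ φ' : ℝ → Fin m → ℝ, ContDiff ℝ 1 φ → (∀ s, HasDerivAt φ (φ' s) s) →
      φ t₀ = x₀ →
      U t₀ x₀ ≤
        (∫ s in t₀..T,
          (1 / 2) * ((φ' s - r (φ s)) ⬝ᵥ (q (φ s))⁻¹.mulVec (φ' s - r (φ s))))
          + h (φ T))
    ∧ U t₀ x₀ ≤
        sInf { y : ℝ | ∃ φ φ' : ℝ → Fin m → ℝ, ContDiff ℝ 1 φ ∧
          (∀ s, HasDerivAt φ (φ' s) s) ∧ φ t₀ = x₀ ∧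
          y = (∫ s in t₀..T,
                (1 / 2) * ((φ' s - r (φ s)) ⬝ᵥ (q (φ s))⁻¹.mulVec (φ' s - r (φ s))))
                + h (φ T) } :=
  subsolution_le_value_function_general t₀ T ht r q hr hqc hqpd h U Ut Ux hU hUt hUx hsub hterm x₀
end

section
/- Let (Γ, 𝒢, ν) be a probability space, D, λ > 0, θ ∈ [−1,1], and Q̃ : Γ → ℝ measurable with e^{Q̃/D} and e^{−Q̃/D} both ν-integrable. Set K = ∫_Γ e^{Q̃/D} dν, Z = ∫_Γ e^{−Q̃/D} dν, ψ̃ = (1/K)e^{Q̃/D} − 1, and let π be the probability measure with density e^{−Q̃/D}/Z with respect to ν. Then the effective diffusivity q := ∫_Γ [(√λ + √(2D)·θ·ψ̃)² + 2D(1−θ²)·ψ̃²] dπ equals λ + (2D − 2θ·√λ·√(2D))·(1 − 1/(K·Z)). -/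
open MeasureTheory
open scoped NNReal ENNReal

/-- The effective diffusivity of the one-dimensional gradient example:
`q = ∫ [(√λ + √(2D)·θ·ψ̃)² + 2D(1−θ²)·ψ̃²] dπ = λ + (2D − 2θ√λ√(2D))·(1 − 1/(K·Z))`,
where `ψ̃ = (1/K)e^{Q̃/D} − 1` and `π(dγ) = (e^{−Q̃/D}/Z) ν(dγ)`. -/
theorem effective_diffusivity_formula {Γ : Type*} [MeasurableSpace Γ]
    (ν : Measure Γ) [IsProbabilityMeasure ν]
    (D lam θ : ℝ) (hD : 0 < D) (hlam : 0 < lam) (hθ : θ ∈ Set.Icc (-1 : ℝ) 1)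
    (Q : Γ → ℝ) (hQ : Measurable Q)
    (hint1 : Integrable (fun γ => Real.exp (Q γ / D)) ν)
    (hint2 : Integrable (fun γ => Real.exp (-Q γ / D)) ν)
    (K Z : ℝ)
    (hK : K = ∫ γ, Real.exp (Q γ / D) ∂ν)
    (hZ : Z = ∫ γ, Real.exp (-Q γ / D) ∂ν)
    (ψ : Γ → ℝ) (hψ : ∀ γ, ψ γ = (1 / K) * Real.exp (Q γ / D) - 1)
    (π : Measure Γ)
    (hπ : π = ν.withDensity (fun γ => ENNReal.ofReal (Real.exp (-Q γ / D) / Z))) :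
    ∫ γ, ((Real.sqrt lam + Real.sqrt (2 * D) * θ * ψ γ) ^ 2
            + 2 * D * (1 - θ ^ 2) * (ψ γ) ^ 2) ∂π
      = lam + (2 * D - 2 * θ * Real.sqrt lam * Real.sqrt (2 * D)) * (1 - 1 / (K * Z)) := by

  obtain ⟨hθ1, hθ2⟩ := hθ
  set s : ℝ := Real.sqrt lam with hsdef
  set t : ℝ := Real.sqrt (2 * D) with htdef
  have hs : s ^ 2 = lam := Real.sq_sqrt hlam.le
  have ht : t ^ 2 = 2 * D := Real.sq_sqrt (by linarith)
  have hKpos : 0 < K := by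
    rw [hK]; exact integral_exp_pos hint1
  have hZpos : 0 < Z := by
    rw [hZ]; exact integral_exp_pos hint2
  set E : Γ → ℝ := fun γ => Real.exp (Q γ / D) with hEdef
  set F : Γ → ℝ := fun γ => Real.exp (-Q γ / D) with hFdef
  set c1 : ℝ := (lam - 2 * s * t * θ + 2 * D) / Z with hc1
  set c2 : ℝ := (2 * s * t * θ - 4 * D) / (K * Z) with hc2
  set c3 : ℝ := (2 * D) / (K ^ 2 * Z) with hc3
  have key : ∀ x : ℝ, (s + t * θ * x) ^ 2 + 2 * D * (1 - θ ^ 2) * x ^ 2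
      = lam + 2 * s * t * θ * x + 2 * D * x ^ 2 := fun x => by
    linear_combination hs + θ ^ 2 * x ^ 2 * ht
  have hmeas : Measurable fun γ => (Real.exp (-Q γ / D) / Z).toNNReal :=
    ((Real.measurable_exp.comp (hQ.neg.div_const D)).div_const Z).real_toNNReal
  have hpt : ∀ γ, ((Real.exp (-Q γ / D) / Z).toNNReal : ℝ≥0)
        • ((s + t * θ * ψ γ) ^ 2 + 2 * D * (1 - θ ^ 2) * (ψ γ) ^ 2)
      = c1 * F γ + c2 + c3 * E γ := by
    intro γ
    have hEpos : 0 < E γ := Real.exp_pos _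
    have hF1 : F γ = (E γ)⁻¹ := by
      rw [hEdef, hFdef]
      simp only [← Real.exp_neg]
      ring_nf
    rw [NNReal.smul_def, Real.coe_toNNReal _ (by positivity), key (ψ γ), hψ γ]
    show F γ / Z * _ = _
    rw [hF1, hc1, hc2, hc3]
    field_simp
    ring
  rw [hπ]
  have hd : (fun γ => ENNReal.ofReal (Real.exp (-Q γ / D) / Z))
      = fun γ => ((Real.exp (-Q γ / D) / Z).toNNReal : ℝ≥0∞) := rfl
  rw [hd, integral_withDensity_eq_integral_smul hmeas]
  calc ∫ γ, ((Real.exp (-Q γ / D) / Z).toNNReal : ℝ≥0)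
        • ((s + t * θ * ψ γ) ^ 2 + 2 * D * (1 - θ ^ 2) * (ψ γ) ^ 2) ∂ν
      = ∫ γ, (c1 * F γ + c2 + c3 * E γ) ∂ν := integral_congr_ae (ae_of_all _ hpt)
    _ = c1 * Z + c2 + c3 * K := by
        have hI12 : Integrable (fun γ => c1 * F γ + c2) ν :=
          (hint2.const_mul c1).add (integrable_const c2)
        rw [integral_add hI12 (hint1.const_mul c3),
          integral_add (hint2.const_mul c1) (integrable_const c2),
          integral_const_mul, integral_const_mul, integral_const]
        simp [hK, hZ]
    _ = lam + (2 * D - 2 * θ * s * t) * (1 - 1 / (K * Z)) := by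
        rw [hc1, hc2, hc3]
        field_simp
        ring
end

section
/- Let q > 0 and T ∈ ℝ, and define G : (−∞,T] × ℝ → ℝ by G(t,x) = (e^T − x·e^t)² / ((1+q)e^{2T} − q·e^{2t}). Then: (i) the denominator satisfies (1+q)e^{2T} − q·e^{2t} ≥ e^{2T} > 0 for all t ≤ T; (ii) G(T,x) = (x−1)² for all x ∈ ℝ; and (iii) for all t < T and all x ∈ ℝ, G satisfies the homogenized Hamilton–Jacobi–Bellman equation ∂_t G(t,x) − x·∂_x G(t,x) − (q/2)·(∂_x G(t,x))² = 0. -/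
/-!
With `A = e^T − x e^t` and `D = (1+q)e^{2T} − q e^{2t}` one has `∂_x G = −2e^t A / D` and
`∂_t G = −2x e^t A / D + 2q e^{2t} A² / D²`. The first term of `∂_t G` is exactly `x ∂_x G`,
and the second is `(q/2)(∂_x G)²`.
-/

open Real

lemma exp_two_mul_eq_sq (x : ℝ) : exp (2 * x) = exp x ^ 2 := by
  rw [← exp_nat_mul]
  norm_num

lemma exp_two_mul_le_sub_mul_exp_two_mul {q t T : ℝ} (hq : 0 ≤ q) (ht : t ≤ T) :
    exp (2 * T) ≤ (1 + q) * exp (2 * T) - q * exp (2 * t) := by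
  have : exp (2 * t) ≤ exp (2 * T) := exp_le_exp.2 (by linarith)
  nlinarith

lemma hasDerivAt_sq_sub_mul_div (a b D x : ℝ) :
    HasDerivAt (fun y => (a - y * b) ^ 2 / D) (-2 * b * (a - x * b) / D) x :=
  ((((hasDerivAt_id x).mul_const b).const_sub a).fun_pow 2).div_const D |>.congr_deriv
    (by simp only [id, Nat.cast_ofNat]; ring)

lemma hasDerivAt_exp_two_mul (t : ℝ) :
    HasDerivAt (fun s => exp (2 * s)) (2 * exp (2 * t)) t := by
  simpa [mul_comm] using ((hasDerivAt_id t).const_mul 2).exp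

lemma hasDerivAt_sq_sub_mul_exp_div {q T x t : ℝ}
    (hD : (1 + q) * exp (2 * T) - q * exp (2 * t) ≠ 0) :
    HasDerivAt (fun s => (exp T - x * exp s) ^ 2 / ((1 + q) * exp (2 * T) - q * exp (2 * s)))
      (-2 * x * exp t * (exp T - x * exp t) / ((1 + q) * exp (2 * T) - q * exp (2 * t))
        + 2 * q * exp (2 * t) * (exp T - x * exp t) ^ 2
          / ((1 + q) * exp (2 * T) - q * exp (2 * t)) ^ 2) t := by
  have hnum := (((hasDerivAt_exp t).const_mul x).const_sub (exp T)).fun_pow 2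
  have hden := ((hasDerivAt_exp_two_mul t).const_mul q).const_sub ((1 + q) * exp (2 * T))
  refine (hnum.fun_div hden hD).congr_deriv ?_
  field_simp
  ring

/-- The explicit function `G(t,x) = (e^T − x·e^t)² / ((1+q)e^{2T} − q·e^{2t})` of the
numerical example: (i) its denominator is bounded below by `e^{2T} > 0` for `t ≤ T`;
(ii) it has terminal value `G(T,x) = (x−1)²`; and (iii) for `t < T` it solves the
homogenized HJB equation `∂_t G − x·∂_x G − (q/2)(∂_x G)² = 0`. -/
theorem explicit_value_function_solves_HJB (q T : ℝ) (hq : 0 < q)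
    (G : ℝ → ℝ → ℝ)
    (hG : ∀ t x, G t x =
      (Real.exp T - x * Real.exp t) ^ 2
        / ((1 + q) * Real.exp (2 * T) - q * Real.exp (2 * t))) :
    (∀ t ≤ T, Real.exp (2 * T) ≤ (1 + q) * Real.exp (2 * T) - q * Real.exp (2 * t)
        ∧ 0 < Real.exp (2 * T))
    ∧ (∀ x : ℝ, G T x = (x - 1) ^ 2)
    ∧ (∀ t < T, ∀ x : ℝ,
        deriv (fun s => G s x) t - x * deriv (fun y => G t y) x
          - (q / 2) * (deriv (fun y => G t y) x) ^ 2 = 0) := by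
  have hden (t : ℝ) (ht : t ≤ T) := exp_two_mul_le_sub_mul_exp_two_mul hq.le ht
  refine ⟨fun t ht => ⟨hden t ht, exp_pos _⟩, fun x => ?_, fun t ht x => ?_⟩
  · rw [hG, exp_two_mul_eq_sq]
    field_simp
    ring
  · have hD : (1 + q) * exp (2 * T) - q * exp (2 * t) ≠ 0 :=
      ((exp_pos _).trans_le (hden t ht.le)).ne'
    have hGt : (fun s => G s x) = _ := funext fun s => hG s x
    have hGx : (fun y => G t y) = _ := funext fun y => hG t y
    rw [hGt, hGx, (hasDerivAt_sq_sub_mul_exp_div hD).deriv,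
      (hasDerivAt_sq_sub_mul_div _ _ _ x).deriv, exp_two_mul_eq_sq, exp_two_mul_eq_sq]
    field_simp
    ring
end
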